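/- arXiv:1205.2753 — 3 statements merged into one kernel-verified Lean document; each statement's English description precedes it below -/
import Mathlib

section
/- Fiber contraction theorem: let F : X → X be a map on a topological space X with a globally attracting fixed point x* (i.e. F^n(x) → x* for all x), let Y be a complete metric space, and let G : X × Y → Y be continuous with y ↦ G(x,y) a contraction with uniform constant q < 1 for each x. If y* is the fixed point of G(x*,·) and G is continuous at points (x*, y) for all y, then (x*, y*) is a globally attracting fixed point of the map (x,y) ↦ (F(x), G(x,y)) restricted to points whose X-component converges to x* — more precisely, for every (x,y) with F^n(x) → x*, the iterates of (x,y) under (F,G) converge to (x*,y*). -/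
/-!
Along an orbit, the `Y`-components satisfy `y (n+1) = g n (y n)` with `g n = G (F^[n] x) ·` a
`q`-contraction. Continuity of `G` at `x*` makes `g n y*` tend to `y*`, so `d n = dist (y n) y*`
obeys `d (n+1) ≤ q * d n + ε n` with `ε n → 0`; such a perturbed geometric recursion forces
`d n → 0`.
-/

open Filter Topology

lemma le_pow_mul_add_div_of_le_mul_add {q δ : ℝ} (hq0 : 0 ≤ q) (hq : q < 1) (hδ : 0 ≤ δ)
    {d : ℕ → ℝ} {N : ℕ} (h : ∀ n ≥ N, d (n + 1) ≤ q * d n + δ) (k : ℕ) :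
    d (k + N) ≤ q ^ k * d N + δ / (1 - q) := by
  induction k with
  | zero => simpa using div_nonneg hδ (sub_nonneg.2 hq.le)
  | succ k ih =>
    have h1q : 1 - q ≠ 0 := by linarith
    calc d (k + 1 + N) = d (k + N + 1) := by rw [add_right_comm]
      _ ≤ q * d (k + N) + δ := h _ (Nat.le_add_left N k)
      _ ≤ q * (q ^ k * d N + δ / (1 - q)) + δ := by gcongr
      _ = q ^ (k + 1) * d N + δ / (1 - q) := by field_simp; ring

lemma tendsto_zero_of_le_mul_add {q : ℝ} (hq0 : 0 ≤ q) (hq : q < 1) {d ε : ℕ → ℝ}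
    (hd : ∀ n, 0 ≤ d n) (hrec : ∀ n, d (n + 1) ≤ q * d n + ε n) (hε : Tendsto ε atTop (𝓝 0)) :
    Tendsto d atTop (𝓝 0) := by
  refine tendsto_order.2 ⟨fun a ha => .of_forall fun n => ha.trans_le (hd n), fun a ha => ?_⟩
  set δ := (1 - q) * (a / 2)
  have hδ : 0 < δ := mul_pos (by linarith) (half_pos ha)
  obtain ⟨N, hN⟩ := eventually_atTop.1 ((tendsto_order.1 hε).2 δ hδ)
  have hbound := le_pow_mul_add_div_of_le_mul_add hq0 hq hδ.le
    (N := N) (fun n hn => (hrec n).trans (by linarith [hN n hn]))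
  have hgeom : Tendsto (fun k => q ^ k * d N) atTop (𝓝 0) := by
    simpa using (tendsto_pow_atTop_nhds_zero_of_lt_one hq0 hq).mul_const (d N)
  rw [← map_add_atTop_eq_nat N, eventually_map]
  filter_upwards [(tendsto_order.1 hgeom).2 (a / 2) (half_pos ha)] with k hk
  have : δ / (1 - q) = a / 2 := by simp only [δ]; field_simp [show 1 - q ≠ 0 by linarith]
  linarith [hbound k]

theorem tendsto_of_uniform_contraction {Y : Type*} [PseudoMetricSpace Y] {q : ℝ} (hq0 : 0 ≤ q)
    (hq : q < 1) {g : ℕ → Y → Y} (hg : ∀ n y y', dist (g n y) (g n y') ≤ q * dist y y')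
    {y₀ : Y} (hfix : Tendsto (fun n => g n y₀) atTop (𝓝 y₀)) {y : ℕ → Y}
    (hy : ∀ n, y (n + 1) = g n (y n)) : Tendsto y atTop (𝓝 y₀) := by
  refine tendsto_iff_dist_tendsto_zero.2 <| tendsto_zero_of_le_mul_add hq0 hq
    (fun _ => dist_nonneg) (fun n => ?_) (tendsto_iff_dist_tendsto_zero.1 hfix)
  calc dist (y (n + 1)) y₀ ≤ dist (g n (y n)) (g n y₀) + dist (g n y₀) y₀ :=
        hy n ▸ dist_triangle _ _ _
    _ ≤ q * dist (y n) y₀ + dist (g n y₀) y₀ := by gcongr; exact hg n _ _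

section SkewProd

variable {X Y : Type*} (F : X → X) (G : X → Y → Y)

def skewProd (p : X × Y) : X × Y := (F p.1, G p.1 p.2)

lemma fst_iterate_skewProd (p : X × Y) (n : ℕ) :
    ((skewProd F G)^[n] p).1 = F^[n] p.1 := by
  induction n with
  | zero => rfl
  | succ n ih => rw [Function.iterate_succ_apply', Function.iterate_succ_apply', ← ih]; rfl

lemma snd_iterate_succ_skewProd (p : X × Y) (n : ℕ) :
    ((skewProd F G)^[n + 1] p).2 = G (F^[n] p.1) ((skewProd F G)^[n] p).2 := by
  rw [Function.iterate_succ_apply', ← fst_iterate_skewProd]; rfl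

end SkewProd

theorem fiber_contraction_theorem_general
    (X : Type*) [TopologicalSpace X]
    (Y : Type*) [MetricSpace Y]
    (F : X → X) (xstar : X)
    (hattract : ∀ x : X, Tendsto (fun n => F^[n] x) atTop (nhds xstar))
    (G : X → Y → Y) (hGcont : Continuous fun p : X × Y => G p.1 p.2)
    (q : ℝ) (hq0 : 0 ≤ q) (hq : q < 1)
    (hcontr : ∀ x : X, ∀ y y' : Y, dist (G x y) (G x y') ≤ q * dist y y')
    (ystar : Y) (hGfix : G xstar ystar = ystar) :
    ∀ x : X, ∀ y : Y,
      Tendsto (fun n => (fun p : X × Y => (F p.1, G p.1 p.2))^[n] (x, y))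
        atTop (nhds (xstar, ystar)) := by
  intro x y
  have hfst : Tendsto (fun n => ((skewProd F G)^[n] (x, y)).1) atTop (𝓝 xstar) := by
    simpa only [fst_iterate_skewProd] using hattract x
  have hGstar : Tendsto (fun n => G (F^[n] x) ystar) atTop (𝓝 ystar) := by
    have hcont : Continuous fun x' => G x' ystar := hGcont.comp (.prodMk_left ystar)
    simpa only [hGfix, Function.comp_def] using (hcont.tendsto xstar).comp (hattract x)
  have hsnd : Tendsto (fun n => ((skewProd F G)^[n] (x, y)).2) atTop (𝓝 ystar) :=
    tendsto_of_uniform_contraction hq0 hq (fun n => hcontr (F^[n] x)) hGstar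
      (snd_iterate_succ_skewProd F G (x, y))
  exact hfst.prodMk_nhds hsnd

/-- fiber contraction theorem: if `F : X → X` has a globally
attracting fixed point `x*`, and `G : X × Y → Y` is continuous with each fiber
map `G(x,·)` a contraction with uniform constant `q < 1` on the complete metric
space `Y`, and `y*` is the fixed point of `G(x*,·)`, then every orbit of the
skew-product `(x,y) ↦ (F x, G x y)` converges to `(x*, y*)`. -/
theorem fiber_contraction_theorem
    (X : Type*) [TopologicalSpace X]
    (Y : Type*) [MetricSpace Y] [CompleteSpace Y]
    (F : X → X) (xstar : X) (hFfix : F xstar = xstar)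
    (hattract : ∀ x : X, Tendsto (fun n => F^[n] x) atTop (nhds xstar))
    (G : X → Y → Y) (hGcont : Continuous fun p : X × Y => G p.1 p.2)
    (q : ℝ) (hq0 : 0 ≤ q) (hq : q < 1)
    (hcontr : ∀ x : X, ∀ y y' : Y, dist (G x y) (G x y') ≤ q * dist y y')
    (ystar : Y) (hGfix : G xstar ystar = ystar) :
    ∀ x : X, ∀ y : Y,
      Tendsto (fun n => (fun p : X × Y => (F p.1, G p.1 p.2))^[n] (x, y))
        atTop (nhds (xstar, ystar)) :=
  fiber_contraction_theorem_general X Y F xstar hattract G hGcont q hq0 hq hcontr ystar hGfix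
end

section
/- Let Y be a Banach space, ρ < 0, C > 0, and let f : ℝ × Y → Y be continuous, bounded by F in norm, and Lipschitz in y with constant L satisfying CL/(-ρ) < 1. Let Ψ(t,τ) satisfy ‖Ψ(t,τ)‖ ≤ Ce^{ρ(t-τ)} for τ ≤ t, together with the evolution property Ψ(t,s)Ψ(s,τ) = Ψ(t,τ) and differentiability ∂_t Ψ(t,τ) = A(t)Ψ(t,τ). Then the unique fixed point y* ∈ BC(ℝ,Y) of T(y)(t) = ∫_{-∞}^t Ψ(t,τ) f(τ, y(τ)) dτ is a solution of the ODE y'(t) = A(t)y(t) + f(t, y(t)) that is bounded on all of ℝ, with sup_t ‖y*(t)‖ ≤ CF/(-ρ). -/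
/-!
Splitting the Perron integral at a time `a < t` and using `Ψ(s,τ) = Ψ(s,a) Ψ(a,τ)` gives
`y(s) = Ψ(s,a) (y(a) + ∫_a^s Ψ(a,τ) f(τ, y(τ)) dτ)`. The vector in brackets is differentiable with
derivative `Ψ(a,s) f(s, y(s))` by the fundamental theorem of calculus, and `s ↦ Ψ(s,a)` is only
strongly differentiable, but it is bounded near `t`, which suffices for the product rule. The bound
on `y` comes from integrating `‖Ψ(t,τ)‖ ‖f‖ ≤ C F e^{ρ(t-τ)}`.
-/

open MeasureTheory Real Set Filter Topology

theorem tendsto_apply_of_eventually_norm_le {α 𝕜 E F : Type*} [NontriviallyNormedField 𝕜]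
    [NormedAddCommGroup E] [NormedSpace 𝕜 E] [NormedAddCommGroup F] [NormedSpace 𝕜 F]
    {l : Filter α} {T : α → E →L[𝕜] F} {w : α → E} {z : E} {p : F} {K : ℝ}
    (hT : ∀ᶠ x in l, ‖T x‖ ≤ K) (hTz : Tendsto (fun x => T x z) l (𝓝 p)) (hw : Tendsto w l (𝓝 z)) :
    Tendsto (fun x => T x (w x)) l (𝓝 p) := by
  have h0 : Tendsto (fun x => T x (w x - z)) l (𝓝 0) :=
    (tendsto_sub_nhds_zero_iff.2 hw).op_zero_isBoundedUnder_le (isBoundedUnder_of_eventually_le hT)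
      (fun v S => S v) fun v S => by rw [mul_comm]; exact S.le_opNorm v
  simpa using h0.add hTz

theorem hasDerivAt_apply_of_forall_hasDerivAt {E F : Type*} [NormedAddCommGroup E]
    [NormedSpace ℝ E] [NormedAddCommGroup F] [NormedSpace ℝ F] {T : ℝ → E →L[ℝ] F} {D : E → F}
    {v : ℝ → E} {v' : E} {t K : ℝ} (hT : ∀ z, HasDerivAt (fun s => T s z) (D z) t)
    (hbdd : ∀ᶠ s in 𝓝 t, ‖T s‖ ≤ K) (hv : HasDerivAt v v' t) :
    HasDerivAt (fun s => T s (v s)) (D (v t) + T t v') t := by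
  have hrest : HasDerivAt (fun s => T s (v s - v t)) (T t v') t := by
    rw [hasDerivAt_iff_tendsto_slope]
    have hslope : slope (fun s => T s (v s - v t)) t = fun s => T s (slope v t s) := by
      funext s
      simp only [slope_def_module, sub_self, map_zero, sub_zero, map_smul]
    rw [hslope]
    exact tendsto_apply_of_eventually_norm_le (hbdd.filter_mono nhdsWithin_le_nhds)
      ((hT v').continuousAt.tendsto.mono_left nhdsWithin_le_nhds)
      (hasDerivAt_iff_tendsto_slope.1 hv)
  convert (hT (v t)).add hrest using 1
  funext s
  rw [Pi.add_apply, ← map_add, add_sub_cancel]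

theorem exp_mul_sub_eq (ρ t : ℝ) :
    (fun τ => exp (ρ * (t - τ))) = fun τ => exp (ρ * t) * exp (-ρ * τ) := by
  funext τ
  rw [← exp_add]
  ring_nf

theorem integrableOn_exp_mul_sub_Iic {ρ : ℝ} (hρ : ρ < 0) (t : ℝ) :
    IntegrableOn (fun τ => exp (ρ * (t - τ))) (Iic t) := by
  rw [exp_mul_sub_eq]
  exact (integrableOn_exp_mul_Iic (neg_pos.2 hρ) t).const_mul _

theorem integral_exp_mul_sub_Iic {ρ : ℝ} (hρ : ρ < 0) (t : ℝ) :
    ∫ τ in Iic t, exp (ρ * (t - τ)) = 1 / (-ρ) := by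
  rw [exp_mul_sub_eq, integral_const_mul, integral_exp_mul_Iic (neg_pos.2 hρ), ← mul_div_assoc,
    ← exp_add]
  ring_nf
  simp

section Propagator

variable {Y : Type*} [NormedAddCommGroup Y] [NormedSpace ℝ Y] {Ψ : ℝ → ℝ → Y →L[ℝ] Y}

theorem propagator_apply_apply (hev : ∀ t s τ, (Ψ t s).comp (Ψ s τ) = Ψ t τ) (t s τ : ℝ)
    (z : Y) : Ψ t s (Ψ s τ z) = Ψ t τ z := by
  rw [← ContinuousLinearMap.comp_apply, hev]

theorem continuous_propagator_apply (hid : ∀ t, Ψ t t = ContinuousLinearMap.id ℝ Y)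
    (hev : ∀ t s τ, (Ψ t s).comp (Ψ s τ) = Ψ t τ) (hcont : ∀ τ z, Continuous fun s => Ψ s τ z)
    {K : ℝ} (hK : ∀ t τ, τ ≤ t → ‖Ψ t τ‖ ≤ K) {g : ℝ → Y} (hg : Continuous g) (a : ℝ) :
    Continuous fun τ => Ψ a τ (g τ) := by
  -- Only `Ψ b τ` with `τ ≤ b` is bounded, so continuity is first proved on `Iic b` and then
  -- transported by `Ψ a τ = Ψ a b ∘ Ψ b τ`.
  have hbelow : ∀ b, ContinuousOn (fun τ => Ψ b τ (g τ)) (Iic b) := by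
    intro b τ₀ _
    have hw : Tendsto (fun τ => g τ - Ψ τ τ₀ (g τ₀)) (𝓝[Iic b] τ₀) (𝓝 0) := by
      simpa [hid] using
        ((hg.tendsto τ₀).sub ((hcont τ₀ (g τ₀)).tendsto τ₀)).mono_left nhdsWithin_le_nhds
    have hzero := tendsto_apply_of_eventually_norm_le (l := 𝓝[Iic b] τ₀) (T := fun τ => Ψ b τ)
      (p := 0) (eventually_nhdsWithin_of_forall fun τ hτ => hK b τ hτ)
      (by simpa using tendsto_const_nhds) hw
    rw [ContinuousWithinAt, ← tendsto_sub_nhds_zero_iff]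
    simpa only [map_sub, propagator_apply_apply hev] using hzero
  refine continuous_iff_continuousAt.2 fun τ₀ => ?_
  have hfac : (fun τ => Ψ a τ (g τ)) = fun τ => Ψ a (τ₀ + 1) (Ψ (τ₀ + 1) τ (g τ)) := by
    simp only [propagator_apply_apply hev]
  rw [hfac]
  exact (Ψ a (τ₀ + 1)).continuous.continuousAt.comp
    ((hbelow (τ₀ + 1)).continuousAt (Iic_mem_nhds (by linarith)))

variable {C ρ F : ℝ} {g : ℝ → Y}

theorem norm_propagator_apply_le (hC : 0 ≤ C)
    (hbdd : ∀ t τ, τ ≤ t → ‖Ψ t τ‖ ≤ C * exp (ρ * (t - τ))) (hgF : ∀ τ, ‖g τ‖ ≤ F) {t τ : ℝ}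
    (hτ : τ ≤ t) : ‖Ψ t τ (g τ)‖ ≤ C * F * exp (ρ * (t - τ)) :=
  calc ‖Ψ t τ (g τ)‖ ≤ ‖Ψ t τ‖ * ‖g τ‖ := (Ψ t τ).le_opNorm _
    _ ≤ C * exp (ρ * (t - τ)) * F :=
        mul_le_mul (hbdd t τ hτ) (hgF τ) (norm_nonneg _) (by positivity)
    _ = C * F * exp (ρ * (t - τ)) := by ring

theorem integrableOn_Iic_propagator_apply (hρ : ρ < 0) (hC : 0 ≤ C)
    (hbdd : ∀ t τ, τ ≤ t → ‖Ψ t τ‖ ≤ C * exp (ρ * (t - τ))) (hgF : ∀ τ, ‖g τ‖ ≤ F) {t : ℝ}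
    (hcont : Continuous fun τ => Ψ t τ (g τ)) :
    IntegrableOn (fun τ => Ψ t τ (g τ)) (Iic t) :=
  ((integrableOn_exp_mul_sub_Iic hρ t).const_mul (C * F)).mono' hcont.aestronglyMeasurable <|
    (ae_restrict_mem measurableSet_Iic).mono fun _ hτ => norm_propagator_apply_le hC hbdd hgF hτ

theorem norm_setIntegral_Iic_propagator_apply_le (hρ : ρ < 0) (hC : 0 ≤ C)
    (hbdd : ∀ t τ, τ ≤ t → ‖Ψ t τ‖ ≤ C * exp (ρ * (t - τ))) (hgF : ∀ τ, ‖g τ‖ ≤ F) (t : ℝ) :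
    ‖∫ τ in Iic t, Ψ t τ (g τ)‖ ≤ C * F / (-ρ) :=
  calc ‖∫ τ in Iic t, Ψ t τ (g τ)‖ ≤ ∫ τ in Iic t, C * F * exp (ρ * (t - τ)) :=
        norm_integral_le_of_norm_le ((integrableOn_exp_mul_sub_Iic hρ t).const_mul _) <|
          (ae_restrict_mem measurableSet_Iic).mono fun _ hτ =>
            norm_propagator_apply_le hC hbdd hgF hτ
    _ = C * F / (-ρ) := by rw [integral_const_mul, integral_exp_mul_sub_Iic hρ t, mul_one_div]

theorem eq_propagator_apply_add_intervalIntegral [CompleteSpace Y]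
    (hev : ∀ t s τ, (Ψ t s).comp (Ψ s τ) = Ψ t τ)
    (hint : ∀ t, IntegrableOn (fun τ => Ψ t τ (g τ)) (Iic t)) {a : ℝ}
    (hcont : Continuous fun τ => Ψ a τ (g τ)) {y : ℝ → Y}
    (hfix : ∀ t, y t = ∫ τ in Iic t, Ψ t τ (g τ)) (s : ℝ) :
    y s = Ψ s a (y a + ∫ τ in a..s, Ψ a τ (g τ)) := by
  have hint_s : IntegrableOn (fun τ => Ψ a τ (g τ)) (Iic s) :=
    (integrableOn_union.2 ⟨hint a, hcont.integrableOn_Icc⟩).mono_set Iic_subset_Iic_union_Icc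
  calc y s = ∫ τ in Iic s, Ψ s a (Ψ a τ (g τ)) := by
        simp only [hfix s, propagator_apply_apply hev]
    _ = Ψ s a (∫ τ in Iic s, Ψ a τ (g τ)) := (Ψ s a).integral_comp_comm hint_s
    _ = Ψ s a (y a + ∫ τ in a..s, Ψ a τ (g τ)) := by
        rw [hfix a, ← intervalIntegral.integral_Iic_sub_Iic (hint a) hint_s, add_sub_cancel]

end Propagator

theorem perron_fixed_point_solves_ode_general
    (Y : Type*) [NormedAddCommGroup Y] [NormedSpace ℝ Y] [CompleteSpace Y]
    (ρ C F L : ℝ) (hρ : ρ < 0) (hC : 0 < C)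
    (f : ℝ → Y → Y) (hfcont : Continuous fun p : ℝ × Y => f p.1 p.2)
    (hfbdd : ∀ t y, ‖f t y‖ ≤ F)
    (A : ℝ → Y →L[ℝ] Y)
    (Ψ : ℝ → ℝ → Y →L[ℝ] Y)
    (hΨid : ∀ t : ℝ, Ψ t t = ContinuousLinearMap.id ℝ Y)
    (hΨev : ∀ t s τ : ℝ, (Ψ t s).comp (Ψ s τ) = Ψ t τ)
    (hΨbdd : ∀ t τ : ℝ, τ ≤ t → ‖Ψ t τ‖ ≤ C * exp (ρ * (t - τ)))
    (hΨ' : ∀ τ t : ℝ, ∀ y : Y, HasDerivAt (fun s => Ψ s τ y) (A t (Ψ t τ y)) t)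
    (ystar : BoundedContinuousFunction ℝ Y)
    (hfix : ∀ t : ℝ, ystar t = ∫ τ in Iic t, Ψ t τ (f τ (ystar τ))) :
    (∀ t : ℝ, HasDerivAt (fun s => ystar s) (A t (ystar t) + f t (ystar t)) t) ∧
      ∀ t : ℝ, ‖ystar t‖ ≤ C * F / (-ρ) := by
  set g : ℝ → Y := fun τ => f τ (ystar τ)
  have hg : Continuous g := hfcont.comp (continuous_id.prodMk ystar.continuous)
  have hΨC : ∀ t τ, τ ≤ t → ‖Ψ t τ‖ ≤ C := fun t τ h => (hΨbdd t τ h).trans <|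
    mul_le_of_le_one_right hC.le <|
      exp_le_one_iff.2 (mul_nonpos_of_nonpos_of_nonneg hρ.le (sub_nonneg.2 h))
  have hcont : ∀ a, Continuous fun τ => Ψ a τ (g τ) := continuous_propagator_apply hΨid hΨev
    (fun τ z => continuous_iff_continuousAt.2 fun t => (hΨ' τ t z).continuousAt) hΨC hg
  have hint : ∀ t, IntegrableOn (fun τ => Ψ t τ (g τ)) (Iic t) := fun t =>
    integrableOn_Iic_propagator_apply hρ hC.le hΨbdd (fun τ => hfbdd τ _) (hcont t)
  refine ⟨fun t => ?_, fun t => hfix t ▸ norm_setIntegral_Iic_propagator_apply_le hρ hC.le hΨbdd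
    (fun τ => hfbdd τ _) t⟩
  set a := t - 1
  have hrep : (fun s => ystar s) = fun s => Ψ s a (ystar a + ∫ τ in a..s, Ψ a τ (g τ)) :=
    funext (eq_propagator_apply_add_intervalIntegral hΨev hint (hcont a) hfix)
  have hv := ((hcont a).integral_hasStrictDerivAt a t).hasDerivAt.const_add (ystar a)
  have hbdd : ∀ᶠ s in 𝓝 t, ‖Ψ s a‖ ≤ C :=
    (eventually_ge_nhds (by linarith : a < t)).mono fun s hs => hΨC s a hs
  rw [hrep]
  convert hasDerivAt_apply_of_forall_hasDerivAt (hΨ' a t) hbdd hv using 1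
  rw [← congr_fun hrep t, propagator_apply_apply hΨev, hΨid, ContinuousLinearMap.id_apply]

/-- the unique fixed point `y*` of the Perron operator
`T(y)(t) = ∫_{-∞}^t Ψ(t,τ) f(τ,y(τ)) dτ` is a solution, bounded on all of `ℝ`
by `C·F/(-ρ)`, of the ODE `y' = A(t) y + f(t,y)`. -/
theorem perron_fixed_point_solves_ode
    (Y : Type*) [NormedAddCommGroup Y] [NormedSpace ℝ Y] [CompleteSpace Y]
    (ρ C F L : ℝ) (hρ : ρ < 0) (hC : 0 < C) (hF : 0 ≤ F) (hL : 0 ≤ L)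
    (hq : C * L / (-ρ) < 1)
    (f : ℝ → Y → Y) (hfcont : Continuous fun p : ℝ × Y => f p.1 p.2)
    (hfbdd : ∀ t y, ‖f t y‖ ≤ F)
    (hfLip : ∀ t y y', ‖f t y - f t y'‖ ≤ L * ‖y - y'‖)
    (A : ℝ → Y →L[ℝ] Y)
    (Ψ : ℝ → ℝ → Y →L[ℝ] Y)
    (hΨid : ∀ t : ℝ, Ψ t t = ContinuousLinearMap.id ℝ Y)
    (hΨev : ∀ t s τ : ℝ, (Ψ t s).comp (Ψ s τ) = Ψ t τ)
    (hΨbdd : ∀ t τ : ℝ, τ ≤ t → ‖Ψ t τ‖ ≤ C * exp (ρ * (t - τ)))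
    (hΨ' : ∀ τ t : ℝ, ∀ y : Y, HasDerivAt (fun s => Ψ s τ y) (A t (Ψ t τ y)) t)
    (ystar : BoundedContinuousFunction ℝ Y)
    (hfix : ∀ t : ℝ, ystar t = ∫ τ in Iic t, Ψ t τ (f τ (ystar τ))) :
    (∀ t : ℝ, HasDerivAt (fun s => ystar s) (A t (ystar t) + f t (ystar t)) t) ∧
      ∀ t : ℝ, ‖ystar t‖ ≤ C * F / (-ρ) :=
  perron_fixed_point_solves_ode_general Y ρ C F L hρ hC f hfcont hfbdd A Ψ hΨid hΨev hΨbdd hΨ' ystar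
    hfix
end

section
/- Let E, F be Banach spaces, Λ ⊆ E open, and T : F × Λ → F a map that is C¹ and a uniform contraction in the first variable: ‖D₁T(y,λ)‖ ≤ q < 1 for all (y,λ). Then the fixed-point map Θ : Λ → F (T(Θ(λ),λ) = Θ(λ)) is C¹, and its derivative satisfies DΘ(λ) = (Id − D₁T(Θ(λ),λ))^{-1} ∘ D₂T(Θ(λ),λ). -/
/-!
Near `λ` the maps `T(·, λ')` are uniform `q`-contractions, so comparing their fixed points gives
`‖Θ λ' - Θ λ‖ ≤ ‖T(Θ λ, λ') - T(Θ λ, λ)‖ / (1 - q) = O(‖λ' - λ‖)`. Continuity of `D₁T` at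
`(Θ λ, λ)` and the mean value inequality then give
`T(Θ λ', λ') - T(Θ λ, λ') = D₁T(Θ λ, λ) (Θ λ' - Θ λ) + o(‖λ' - λ‖)`. Subtracting the fixed-point
equations yields `(1 - D₁T(Θ λ, λ)) (Θ λ' - Θ λ) = D₂T(Θ λ, λ) (λ' - λ) + o(‖λ' - λ‖)`, and
`1 - D₁T(Θ λ, λ)` is invertible by the Neumann series.
-/

open Filter Topology Asymptotics Function
open scoped NNReal

section Linear

variable {𝕜 E F : Type*} [NontriviallyNormedField 𝕜]
  [NormedAddCommGroup E] [NormedSpace 𝕜 E] [NormedAddCommGroup F] [NormedSpace 𝕜 F]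

theorem hasFDerivAt_units_inv_comp_of_isLittleO {Θ : E → F} {l : E} (u : (F →L[𝕜] F)ˣ)
    (B : E →L[𝕜] F)
    (h : (fun l' => (u : F →L[𝕜] F) (Θ l' - Θ l) - B (l' - l)) =o[𝓝 l] fun l' => l' - l) :
    HasFDerivAt Θ ((↑u⁻¹ : F →L[𝕜] F).comp B) l := by
  refine HasFDerivAt.of_isLittleO <|
    ((↑u⁻¹ : F →L[𝕜] F).isBigO_comp _ _).trans_isLittleO h |>.congr_left fun l' => ?_
  rw [map_sub, ← mul_apply_eq_comp, u.inv_mul, one_apply_eq_self, ContinuousLinearMap.comp_apply]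

theorem oneSub_inv_comp_sub_comp [CompleteSpace F] (A : F →L[𝕜] F) (hA : ‖A‖ < 1)
    (B : E →L[𝕜] F) :
    (↑(Units.oneSub A hA)⁻¹ : F →L[𝕜] F).comp B
      - A.comp ((↑(Units.oneSub A hA)⁻¹ : F →L[𝕜] F).comp B) = B := by
  set u := Units.oneSub A hA
  calc (↑u⁻¹ : F →L[𝕜] F).comp B - A.comp ((↑u⁻¹ : F →L[𝕜] F).comp B)
      = (↑u : F →L[𝕜] F).comp ((↑u⁻¹ : F →L[𝕜] F).comp B) := by
        rw [Units.val_oneSub, ContinuousLinearMap.sub_comp, ContinuousLinearMap.one_def,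
          ContinuousLinearMap.id_comp]
    _ = B := by
        rw [← ContinuousLinearMap.comp_assoc, ← ContinuousLinearMap.mul_def, u.mul_inv,
          ContinuousLinearMap.one_def, ContinuousLinearMap.id_comp]

end Linear

section MeanValue

variable {α F G : Type*} [PseudoMetricSpace α] [NormedAddCommGroup F] [NormedSpace ℝ F]
  [NormedAddCommGroup G] [NormedSpace ℝ G]

theorem contractingWith_of_norm_hasFDerivAt_le {f : F → F} {f' : F → F →L[ℝ] F} {q : ℝ}
    (hq : q < 1) (hf : ∀ y, HasFDerivAt f (f' y) y) (hbound : ∀ y, ‖f' y‖ ≤ q) :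
    ContractingWith (Real.toNNReal q) f := by
  refine ⟨Real.toNNReal_lt_one.mpr hq, lipschitzOnWith_univ.mp <|
    convex_univ.lipschitzOnWith_of_nnnorm_hasFDerivWithin_le
      (fun y _ => (hf y).hasFDerivWithinAt) fun y _ => ?_⟩
  exact Real.toNNReal_coe (r := ‖f' y‖₊) ▸ Real.toNNReal_le_toNNReal (hbound y)

theorem isLittleO_sub_sub_of_continuousAt_partialFDeriv {f : F → α → G}
    {f' : F → α → F →L[ℝ] G} {y₀ : F} {l : α} {g : α → F}
    (hf : ∀ᶠ l' in 𝓝 l, ∀ y, HasFDerivAt (f · l') (f' y l') y)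
    (hf' : ContinuousAt (fun p : F × α => f' p.1 p.2) (y₀, l))
    (hg : Tendsto g (𝓝 l) (𝓝 y₀)) :
    (fun l' => f (g l') l' - f y₀ l' - f' y₀ l (g l' - y₀)) =o[𝓝 l] fun l' => g l' - y₀ := by
  refine isLittleO_iff.mpr fun ε hε => ?_
  obtain ⟨δ, hδ, hball⟩ := Metric.continuousAt_iff.mp hf' ε hε
  filter_upwards [hf, Metric.ball_mem_nhds l hδ, hg (Metric.ball_mem_nhds y₀ hδ)]
    with l' hfl' hl' hgl'
  refine (convex_ball y₀ δ).norm_image_sub_le_of_norm_hasFDerivWithin_le'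
    (fun y _ => (hfl' y).hasFDerivWithinAt) (fun y hy => ?_) (Metric.mem_ball_self hδ) hgl'
  have hdist : dist (y, l') (y₀, l) < δ := by
    rw [Prod.dist_eq]
    exact max_lt hy hl'
  rw [← dist_eq_norm]
  exact (hball hdist).le

end MeanValue

theorem isBigO_sub_of_contractingWith_isFixedPt {α F : Type*} [NormedAddCommGroup F]
    {T : F → α → F} {Θ : α → F} {L : Filter α} {l : α} {K : ℝ≥0}
    (hcontr : ∀ᶠ l' in L, ContractingWith K (T · l'))
    (hfix : ∀ᶠ l' in L, IsFixedPt (T · l') (Θ l')) (hfix₀ : IsFixedPt (T · l) (Θ l)) :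
    (fun l' => Θ l' - Θ l) =O[L] fun l' => T (Θ l) l' - T (Θ l) l := by
  refine IsBigO.of_bound (1 - K : ℝ)⁻¹ ?_
  filter_upwards [hcontr, hfix] with l' hcontrl' hfixl'
  calc ‖Θ l' - Θ l‖ = dist (Θ l) (Θ l') := by rw [dist_comm, dist_eq_norm]
    _ ≤ dist (Θ l) (T (Θ l) l') / (1 - K) := hcontrl'.dist_le_of_fixedPoint _ hfixl'
    _ = (1 - K : ℝ)⁻¹ * ‖T (Θ l) l' - T (Θ l) l‖ := by
      rw [hfix₀.eq, ← dist_eq_norm, dist_comm, div_eq_inv_mul]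

theorem fixed_point_C1_dependence_general
    (E F : Type*) [NormedAddCommGroup E] [NormedSpace ℝ E]
    [NormedAddCommGroup F] [NormedSpace ℝ F] [CompleteSpace F]
    (Λ : Set E) (hΛ : IsOpen Λ)
    (T : F → E → F)
    (D1 : F → E → F →L[ℝ] F) (D2 : F → E → E →L[ℝ] F)
    (hD1 : ∀ y : F, ∀ l ∈ Λ, HasFDerivAt (fun y' => T y' l) (D1 y l) y)
    (hD2 : ∀ y : F, ∀ l ∈ Λ, HasFDerivAt (fun l' => T y l') (D2 y l) l)
    (hD1cont : Continuous fun p : F × E => D1 p.1 p.2)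
    (q : ℝ) (hq : q < 1)
    (hcontr : ∀ y : F, ∀ l ∈ Λ, ‖D1 y l‖ ≤ q)
    (Θ : E → F) (hΘ : ∀ l ∈ Λ, T (Θ l) l = Θ l) :
    ∀ l ∈ Λ, ∃ D : E →L[ℝ] F,
      HasFDerivAt Θ D l ∧ D - (D1 (Θ l) l).comp D = D2 (Θ l) l := by
  intro l hl
  have hA : ‖D1 (Θ l) l‖ < 1 := (hcontr _ l hl).trans_lt hq
  refine ⟨_, hasFDerivAt_units_inv_comp_of_isLittleO (Units.oneSub _ hA) (D2 (Θ l) l) ?_,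
    oneSub_inv_comp_sub_comp _ hA _⟩
  have hΛl : ∀ᶠ l' in 𝓝 l, l' ∈ Λ := hΛ.mem_nhds hl
  have hΘ_isBigO : (Θ · - Θ l) =O[𝓝 l] (· - l) :=
    (isBigO_sub_of_contractingWith_isFixedPt
      (hΛl.mono fun l' hl' => contractingWith_of_norm_hasFDerivAt_le hq
        (fun y => hD1 y l' hl') fun y => hcontr y l' hl')
      (hΛl.mono hΘ) (hΘ l hl)).trans (hD2 _ l hl).isBigO_sub
  have hΘ_tendsto : Tendsto Θ (𝓝 l) (𝓝 (Θ l)) :=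
    tendsto_sub_nhds_zero_iff.mp <| hΘ_isBigO.trans_tendsto <|
      tendsto_sub_nhds_zero_iff.mpr tendsto_id
  have hr₁ : (fun l' => T (Θ l') l' - T (Θ l) l' - D1 (Θ l) l (Θ l' - Θ l)) =o[𝓝 l] (· - l) :=
    (isLittleO_sub_sub_of_continuousAt_partialFDeriv (hΛl.mono fun l' hl' y => hD1 y l' hl')
      hD1cont.continuousAt hΘ_tendsto).trans_isBigO hΘ_isBigO
  refine (hr₁.add (hD2 (Θ l) l hl).isLittleO).congr' ?_ EventuallyEq.rfl
  filter_upwards [hΛl] with l' hl'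
  rw [Units.val_oneSub, sub_apply, one_apply_eq_self, hΘ l' hl', hΘ l hl]
  abel

/-- `C¹` dependence of the fixed point of a uniform contraction
on parameters: if `T : F × Λ → F` is `C¹` with `‖D₁T‖ ≤ q < 1`, then the
fixed-point map `Θ` is `C¹` with
`DΘ(λ) = (Id − D₁T(Θ λ, λ))⁻¹ ∘ D₂T(Θ λ, λ)`, i.e. `DΘ λ` is the unique `D`
with `D − D₁T(Θ λ, λ) ∘ D = D₂T(Θ λ, λ)`. -/
theorem fixed_point_C1_dependence
    (E F : Type*) [NormedAddCommGroup E] [NormedSpace ℝ E]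
    [NormedAddCommGroup F] [NormedSpace ℝ F] [CompleteSpace F]
    (Λ : Set E) (hΛ : IsOpen Λ)
    (T : F → E → F)
    (D1 : F → E → F →L[ℝ] F) (D2 : F → E → E →L[ℝ] F)
    (hD1 : ∀ y : F, ∀ l ∈ Λ, HasFDerivAt (fun y' => T y' l) (D1 y l) y)
    (hD2 : ∀ y : F, ∀ l ∈ Λ, HasFDerivAt (fun l' => T y l') (D2 y l) l)
    (hD1cont : Continuous fun p : F × E => D1 p.1 p.2)
    (hD2cont : Continuous fun p : F × E => D2 p.1 p.2)
    (q : ℝ) (hq : q < 1)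
    (hcontr : ∀ y : F, ∀ l ∈ Λ, ‖D1 y l‖ ≤ q)
    (Θ : E → F) (hΘ : ∀ l ∈ Λ, T (Θ l) l = Θ l) :
    ∀ l ∈ Λ, ∃ D : E →L[ℝ] F,
      HasFDerivAt Θ D l ∧ D - (D1 (Θ l) l).comp D = D2 (Θ l) l :=
  fixed_point_C1_dependence_general E F Λ hΛ T D1 D2 hD1 hD2 hD1cont q hq hcontr Θ hΘ
end
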